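/- arXiv:1509.02509 — 5 statements merged into one kernel-verified Lean document; each statement's English description precedes it below -/
import Mathlib

section
/- Let ℋ be a complex Hilbert space and D a densely defined closed linear operator on ℋ. Then the derivation δ_D is closed for the operator norm: if (x_n) is a sequence in dom(δ_D), x ∈ B(ℋ), y ∈ B(ℋ), and ‖x_n − x‖ → 0 and ‖δ_D(x_n) − y‖ → 0, then x ∈ dom(δ_D) and δ_D(x) = y. -/
/-!
Statement 3: For a densely defined closed operator `D` on a complex Hilbert space, the
derivation `δ_D` is closed for the operator norm: if `x_n ∈ dom(δ_D)`, `‖x_n − x‖ → 0`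
and `‖δ_D(x_n) − y‖ → 0`, then `x ∈ dom(δ_D)` and `δ_D(x) = y`.
-/

/-- `CommutatorRel D x y` means: `x` preserves `dom D` and `D ∘ x - x ∘ D = y` on `dom D`,
i.e. `x ∈ dom(δ_D)` with `δ_D(x) = y`. -/
def CommutatorRel {H : Type*} [NormedAddCommGroup H] [InnerProductSpace ℂ H]
    (D : H →ₗ.[ℂ] H) (x y : H →L[ℂ] H) : Prop :=
  ∀ (ξ : H) (hξ : ξ ∈ D.domain), ∃ hx : x ξ ∈ D.domain,
    D ⟨x ξ, hx⟩ - x (D ⟨ξ, hξ⟩) = y ξ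

private lemma tendsto_apply_of_norm {H : Type*} [NormedAddCommGroup H]
    [InnerProductSpace ℂ H] (x : ℕ → H →L[ℂ] H) (X : H →L[ℂ] H)
    (hX : Filter.Tendsto (fun n => ‖x n - X‖) Filter.atTop (nhds 0)) (ξ : H) :
    Filter.Tendsto (fun n => x n ξ) Filter.atTop (nhds (X ξ)) := by
  rw [tendsto_iff_norm_sub_tendsto_zero]
  apply squeeze_zero (fun n => norm_nonneg _) (g := fun n => ‖x n - X‖ * ‖ξ‖)
  · intro n
    calc ‖x n ξ - X ξ‖ = ‖(x n - X) ξ‖ := by simp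
      _ ≤ ‖x n - X‖ * ‖ξ‖ := (x n - X).le_opNorm ξ
  · simpa using hX.mul_const ‖ξ‖

theorem delta_isClosed_for_operator_norm
    {H : Type*} [NormedAddCommGroup H] [InnerProductSpace ℂ H] [CompleteSpace H]
    (D : H →ₗ.[ℂ] H) (hdense : Dense (D.domain : Set H)) (hclosed : D.IsClosed)
    (x : ℕ → H →L[ℂ] H) (y : ℕ → H →L[ℂ] H) (X Y : H →L[ℂ] H)
    (hmem : ∀ n, CommutatorRel D (x n) (y n))
    (hX : Filter.Tendsto (fun n => ‖x n - X‖) Filter.atTop (nhds 0))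
    (hY : Filter.Tendsto (fun n => ‖y n - Y‖) Filter.atTop (nhds 0)) :
    CommutatorRel D X Y := by
  intro ξ hξ
  choose hx heq using fun n => hmem n ξ hξ
  -- D (x n ξ) = y n ξ + x n (D ξ)
  have hDval : ∀ n, D ⟨x n ξ, hx n⟩ = y n ξ + x n (D ⟨ξ, hξ⟩) := by
    intro n
    have := heq n
    linear_combination (norm := abel) this
  -- the sequence of graph points
  have hgraph : ∀ n, ((x n ξ, D ⟨x n ξ, hx n⟩) : H × H) ∈ D.graph := fun n =>
    D.mem_graph ⟨x n ξ, hx n⟩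
  have h1 : Filter.Tendsto (fun n => x n ξ) Filter.atTop (nhds (X ξ)) :=
    tendsto_apply_of_norm x X hX ξ
  have h2 : Filter.Tendsto (fun n => D ⟨x n ξ, hx n⟩) Filter.atTop
      (nhds (Y ξ + X (D ⟨ξ, hξ⟩))) := by
    simp only [hDval]
    exact (tendsto_apply_of_norm y Y hY ξ).add
      (tendsto_apply_of_norm x X hX (D ⟨ξ, hξ⟩))
  have hlim : ((X ξ, Y ξ + X (D ⟨ξ, hξ⟩)) : H × H) ∈ D.graph := by
    have := hclosed.mem_of_tendsto ((h1.prodMk_nhds h2))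
      (Filter.Eventually.of_forall hgraph)
    exact this
  rw [LinearPMap.mem_graph_iff] at hlim
  obtain ⟨z, hz1, hz2⟩ := hlim
  have hz1' : (z : H) = X ξ := hz1
  have hXmem : X ξ ∈ D.domain := hz1' ▸ z.2
  refine ⟨hXmem, ?_⟩
  have : (⟨X ξ, hXmem⟩ : D.domain) = z := Subtype.ext hz1'.symm
  rw [this, hz2]
  module
end

section
/- Let ℋ be a complex Hilbert space and D a densely defined closed linear operator on ℋ. Then the set 𝔎¹ := { x ∈ dom(δ_D) : x is a compact operator and δ_D(x) is a compact operator } is a subalgebra of B(ℋ); the norm ‖x‖₁ := ‖x‖ + ‖δ_D(x)‖ on 𝔎¹ is submultiplicative (‖xy‖₁ ≤ ‖x‖₁‖y‖₁); and (𝔎¹, ‖·‖₁) is complete, hence a Banach algebra. -/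
/-- `MemK1 D x y`: `x` is compact, `x ∈ dom(δ_D)` with `δ_D(x) = y`, and `y` is compact;
i.e. `x ∈ 𝔎¹` with witness `y = δ_D(x)`. -/
def MemK1 {H : Type*} [NormedAddCommGroup H] [InnerProductSpace ℂ H]
    (D : H →ₗ.[ℂ] H) (x y : H →L[ℂ] H) : Prop :=
  IsCompactOperator ⇑x ∧ CommutatorRel D x y ∧ IsCompactOperator ⇑y

section aux

variable {H : Type*} [NormedAddCommGroup H] [InnerProductSpace ℂ H]
  {D : H →ₗ.[ℂ] H}

lemma CommutatorRel.add' {x₁ y₁ x₂ y₂ : H →L[ℂ] H}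
    (h₁ : CommutatorRel D x₁ y₁) (h₂ : CommutatorRel D x₂ y₂) :
    CommutatorRel D (x₁ + x₂) (y₁ + y₂) := by
  intro ξ hξ
  obtain ⟨hm₁, he₁⟩ := h₁ ξ hξ
  obtain ⟨hm₂, he₂⟩ := h₂ ξ hξ
  have hm : (x₁ + x₂) ξ ∈ D.domain := by
    simpa using D.domain.add_mem hm₁ hm₂
  refine ⟨hm, ?_⟩
  have : (⟨(x₁ + x₂) ξ, hm⟩ : D.domain) = ⟨x₁ ξ, hm₁⟩ + ⟨x₂ ξ, hm₂⟩ := by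
    ext; simp
  rw [this, D.map_add]
  simp only [ContinuousLinearMap.add_apply] at he₁ he₂ ⊢
  rw [← he₁, ← he₂]; abel

lemma CommutatorRel.mul' {x₁ y₁ x₂ y₂ : H →L[ℂ] H}
    (h₁ : CommutatorRel D x₁ y₁) (h₂ : CommutatorRel D x₂ y₂) :
    CommutatorRel D (x₁ * x₂) (y₁ * x₂ + x₁ * y₂) := by
  intro ξ hξ
  obtain ⟨hm₂, he₂⟩ := h₂ ξ hξ
  obtain ⟨hm₁, he₁⟩ := h₁ (x₂ ξ) hm₂
  have hm : (x₁ * x₂) ξ ∈ D.domain := hm₁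
  refine ⟨hm, ?_⟩
  have h3 : D (⟨(x₁ * x₂) ξ, hm⟩ : D.domain) = D (⟨x₁ (x₂ ξ), hm₁⟩ : D.domain) := rfl
  simp only [ContinuousLinearMap.add_apply, ContinuousLinearMap.mul_apply, h3]
  have : x₁ (D ⟨x₂ ξ, hm₂⟩) = x₁ (y₂ ξ) + x₁ (x₂ (D ⟨ξ, hξ⟩)) := by
    rw [← map_add]
    congr 1
    rw [← he₂]; abel
  rw [← he₁, this]; abel

lemma CommutatorRel.smul' (c : ℂ) {x y : H →L[ℂ] H}
    (h : CommutatorRel D x y) : CommutatorRel D (c • x) (c • y) := by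
  intro ξ hξ
  obtain ⟨hm, he⟩ := h ξ hξ
  have hm' : (c • x) ξ ∈ D.domain := by simpa using D.domain.smul_mem c hm
  refine ⟨hm', ?_⟩
  have : (⟨(c • x) ξ, hm'⟩ : D.domain) = c • ⟨x ξ, hm⟩ := by ext; simp
  rw [this, D.map_smul]
  simp only [ContinuousLinearMap.smul_apply] at he ⊢
  rw [← he]
  rw [smul_sub]

end aux

theorem K1_is_Banach_algebra
    {H : Type*} [NormedAddCommGroup H] [InnerProductSpace ℂ H] [CompleteSpace H]
    (D : H →ₗ.[ℂ] H) (hdense : Dense (D.domain : Set H)) (hclosed : D.IsClosed) :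
    -- `𝔎¹` is a subalgebra of `B(ℋ)`: closed under sums, products, and scalar multiples,
    -- with `δ_D(x₁ + x₂) = δ_D(x₁) + δ_D(x₂)`, `δ_D(x₁x₂) = δ_D(x₁)x₂ + x₁δ_D(x₂)`,
    -- and `δ_D(c • x) = c • δ_D(x)`
    (∀ x₁ y₁ x₂ y₂ : H →L[ℂ] H, MemK1 D x₁ y₁ → MemK1 D x₂ y₂ →
        MemK1 D (x₁ + x₂) (y₁ + y₂) ∧ MemK1 D (x₁ * x₂) (y₁ * x₂ + x₁ * y₂))
    ∧ (∀ (c : ℂ) (x y : H →L[ℂ] H), MemK1 D x y → MemK1 D (c • x) (c • y))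
    -- the norm `‖x‖₁ = ‖x‖ + ‖δ_D(x)‖` is submultiplicative: `‖x₁x₂‖₁ ≤ ‖x₁‖₁ ‖x₂‖₁`
    ∧ (∀ x₁ y₁ x₂ y₂ : H →L[ℂ] H, MemK1 D x₁ y₁ → MemK1 D x₂ y₂ →
        ‖x₁ * x₂‖ + ‖y₁ * x₂ + x₁ * y₂‖ ≤ (‖x₁‖ + ‖y₁‖) * (‖x₂‖ + ‖y₂‖))
    -- `(𝔎¹, ‖·‖₁)` is complete: every `‖·‖₁`-Cauchy sequence in `𝔎¹` converges in `‖·‖₁`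
    -- to an element of `𝔎¹`
    ∧ (∀ x y : ℕ → H →L[ℂ] H, (∀ n, MemK1 D (x n) (y n)) →
        (∀ ε : ℝ, 0 < ε → ∃ N : ℕ, ∀ m ≥ N, ∀ n ≥ N,
          ‖x m - x n‖ + ‖y m - y n‖ < ε) →
        ∃ X Y : H →L[ℂ] H, MemK1 D X Y ∧
          Filter.Tendsto (fun n => ‖x n - X‖ + ‖y n - Y‖) Filter.atTop (nhds 0)) := by
  refine ⟨?_, ?_, ?_, ?_⟩
  · -- subalgebra: sums and products
    rintro x₁ y₁ x₂ y₂ ⟨hcx₁, hr₁, hcy₁⟩ ⟨hcx₂, hr₂, hcy₂⟩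
    refine ⟨⟨?_, hr₁.add' hr₂, ?_⟩, ⟨?_, hr₁.mul' hr₂, ?_⟩⟩
    · simpa using hcx₁.add hcx₂
    · simpa using hcy₁.add hcy₂
    · exact hcx₁.comp_clm x₂
    · exact ((hcy₁.comp_clm x₂).add (hcy₂.clm_comp x₁))
  · -- scalar multiples
    rintro c x y ⟨hcx, hr, hcy⟩
    exact ⟨by simpa using hcx.smul c, hr.smul' c, by simpa using hcy.smul c⟩
  · -- submultiplicativity
    rintro x₁ y₁ x₂ y₂ ⟨hcx₁, -, -⟩ ⟨hcx₂, -, -⟩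
    have h1 : ‖x₁ * x₂‖ ≤ ‖x₁‖ * ‖x₂‖ := norm_mul_le _ _
    have h2 : ‖y₁ * x₂ + x₁ * y₂‖ ≤ ‖y₁‖ * ‖x₂‖ + ‖x₁‖ * ‖y₂‖ :=
      (norm_add_le _ _).trans (add_le_add (norm_mul_le _ _) (norm_mul_le _ _))
    have h3 : (0:ℝ) ≤ ‖y₁‖ * ‖y₂‖ := mul_nonneg (norm_nonneg _) (norm_nonneg _)
    nlinarith
  · -- completeness
    intro x y hmem hcauchy
    have hcx : CauchySeq x := by
      rw [Metric.cauchySeq_iff]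
      intro ε hε
      obtain ⟨N, hN⟩ := hcauchy ε hε
      refine ⟨N, fun m hm n hn => ?_⟩
      have := hN m hm n hn
      rw [dist_eq_norm]
      have : ‖x m - x n‖ ≤ ‖x m - x n‖ + ‖y m - y n‖ := le_add_of_nonneg_right (norm_nonneg _)
      linarith [hN m hm n hn]
    have hcy : CauchySeq y := by
      rw [Metric.cauchySeq_iff]
      intro ε hε
      obtain ⟨N, hN⟩ := hcauchy ε hε
      refine ⟨N, fun m hm n hn => ?_⟩
      rw [dist_eq_norm]
      have : ‖y m - y n‖ ≤ ‖x m - x n‖ + ‖y m - y n‖ := le_add_of_nonneg_left (norm_nonneg _)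
      linarith [hN m hm n hn]
    obtain ⟨X, hX⟩ := cauchySeq_tendsto_of_complete hcx
    obtain ⟨Y, hY⟩ := cauchySeq_tendsto_of_complete hcy
    -- pointwise convergence
    have hXpt : ∀ ξ : H, Filter.Tendsto (fun n => x n ξ) Filter.atTop (nhds (X ξ)) := by
      intro ξ
      exact ((ContinuousLinearMap.apply ℂ H ξ).continuous.tendsto X).comp hX
    have hYpt : ∀ ξ : H, Filter.Tendsto (fun n => y n ξ) Filter.atTop (nhds (Y ξ)) := by
      intro ξ
      exact ((ContinuousLinearMap.apply ℂ H ξ).continuous.tendsto Y).comp hY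
    have hXc : IsCompactOperator ⇑X :=
      isClosed_setOf_isCompactOperator.mem_of_tendsto hX
        (Filter.Eventually.of_forall fun n => (hmem n).1)
    have hYc : IsCompactOperator ⇑Y :=
      isClosed_setOf_isCompactOperator.mem_of_tendsto hY
        (Filter.Eventually.of_forall fun n => (hmem n).2.2)
    have hrel : CommutatorRel D X Y := by
      intro ξ hξ
      -- the graph elements (x n ξ, x n (D ξ) + y n ξ) converge to (X ξ, X (D ξ) + Y ξ)
      have hgr : ∀ n, ((x n) ξ, (x n) (D ⟨ξ, hξ⟩) + (y n) ξ) ∈ D.graph := by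
        intro n
        obtain ⟨hm, he⟩ := (hmem n).2.1 ξ hξ
        rw [LinearPMap.mem_graph_iff]
        refine ⟨⟨x n ξ, hm⟩, rfl, ?_⟩
        simp only
        rw [← he]; abel
      have hlim : Filter.Tendsto (fun n => ((x n) ξ, (x n) (D ⟨ξ, hξ⟩) + (y n) ξ))
          Filter.atTop (nhds (X ξ, X (D ⟨ξ, hξ⟩) + Y ξ)) :=
        (hXpt ξ).prodMk_nhds ((hXpt (D ⟨ξ, hξ⟩)).add (hYpt ξ))
      have hmemgr : (X ξ, X (D ⟨ξ, hξ⟩) + Y ξ) ∈ D.graph :=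
        hclosed.mem_of_tendsto hlim (Filter.Eventually.of_forall hgr)
      rw [LinearPMap.mem_graph_iff] at hmemgr
      obtain ⟨⟨z, hz⟩, hz1, hz2⟩ := hmemgr
      simp only at hz1 hz2
      subst hz1
      refine ⟨hz, ?_⟩
      rw [hz2]; abel
    refine ⟨X, Y, ⟨hXc, hrel, hYc⟩, ?_⟩
    have h1 : Filter.Tendsto (fun n => ‖x n - X‖) Filter.atTop (nhds 0) :=
      tendsto_iff_norm_sub_tendsto_zero.mp hX
    have h2 : Filter.Tendsto (fun n => ‖y n - Y‖) Filter.atTop (nhds 0) :=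
      tendsto_iff_norm_sub_tendsto_zero.mp hY
    simpa using h1.add h2
end

section
/- Let ℋ be a complex Hilbert space and D a densely defined self-adjoint operator on ℋ. If x ∈ dom(δ_D) and μ ∈ ℂ is such that x − μ·1 is invertible in B(ℋ), then (x − μ·1)⁻¹ ∈ dom(δ_D) and δ_D((x − μ·1)⁻¹) = −(x − μ·1)⁻¹ δ_D(x) (x − μ·1)⁻¹. In particular, if δ_D(x) is a compact operator then δ_D((x − μ·1)⁻¹) is a compact operator. -/
open Complex

section

variable {H : Type*} [NormedAddCommGroup H] [InnerProductSpace ℂ H]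

namespace LinearPMap

def addScalar (D : H →ₗ.[ℂ] H) (c : ℂ) : D.domain →ₗ[ℂ] H :=
  D.toFun + c • D.domain.subtype

variable {D : H →ₗ.[ℂ] H}

@[simp]
theorem addScalar_apply (c : ℂ) (a : D.domain) : D.addScalar c a = D a + c • (a : H) := rfl

namespace IsFormalAdjoint

variable (hD : D.IsFormalAdjoint D) (r : ℝ)
include hD

theorem norm_addScalar_sq (a : D.domain) :
    ‖D.addScalar (r * I) a‖ ^ 2 = ‖D a‖ ^ 2 + (r * ‖(a : H)‖) ^ 2 := by
  have him : (inner ℂ (D a) (a : H)).im = 0 := by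
    rw [← conj_eq_iff_im, inner_conj_symm]
    exact (hD a a).symm
  rw [addScalar_apply, @norm_add_sq ℂ, inner_smul_right, norm_smul, mul_pow, mul_pow]
  simp [him, Complex.norm_real]

theorem abs_mul_norm_le_norm_addScalar (a : D.domain) :
    |r| * ‖(a : H)‖ ≤ ‖D.addScalar (r * I) a‖ := by
  rw [← abs_norm (a : H), ← abs_mul]
  refine abs_le_of_sq_le_sq ?_ (norm_nonneg _)
  rw [hD.norm_addScalar_sq]
  exact le_add_of_nonneg_left (sq_nonneg _)

theorem norm_le_norm_addScalar (a : D.domain) : ‖D a‖ ≤ ‖D.addScalar (r * I) a‖ := by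
  refine le_of_pow_le_pow_left₀ two_ne_zero (norm_nonneg _) ?_
  rw [hD.norm_addScalar_sq]
  exact le_add_of_nonneg_right (sq_nonneg _)

variable {r}

theorem eq_zero_of_addScalar_eq {K : H →L[ℂ] H} (hK : ‖K‖ < |r|) {b : D.domain}
    (hb : D.addScalar (r * I) b = K b) : (b : H) = 0 := by
  have h := (hD.abs_mul_norm_le_norm_addScalar r b).trans (hb ▸ K.le_opNorm b)
  have : (|r| - ‖K‖) * ‖(b : H)‖ ≤ 0 := by linarith
  exact norm_le_zero_iff.mp (nonpos_of_mul_nonpos_right this (sub_pos.mpr hK))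

end IsFormalAdjoint

end LinearPMap

namespace IsSelfAdjoint

open LinearPMap

variable [CompleteSpace H] {D : H →ₗ.[ℂ] H} (hD : IsSelfAdjoint D)
include hD

theorem isFormalAdjoint : D.IsFormalAdjoint D := by
  have h := adjoint_isFormalAdjoint hD.dense_domain
  rwa [isSelfAdjoint_def.mp hD] at h

theorem exists_mem_domain_apply_eq_of_inner {u v : H}
    (h : ∀ a : D.domain, inner ℂ v (a : H) = inner ℂ u (D a)) :
    ∃ hu : u ∈ D.domain, D ⟨u, hu⟩ = v := by
  have hu : u ∈ D†.domain := mem_adjoint_domain_of_exists u ⟨v, h⟩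
  obtain ⟨hdom, happly⟩ := LinearPMap.ext_iff.mp (isSelfAdjoint_def.mp hD)
  exact ⟨hdom ▸ hu, (happly ..).symm.trans (adjoint_apply_eq hD.dense_domain ⟨u, hu⟩ h)⟩

variable {r : ℝ} (hr : r ≠ 0)
include hr

theorem isClosed_range_addScalar : IsClosed (LinearMap.range (D.addScalar (r * I)) : Set H) := by
  let G := D.graph
  have : IsClosed (G : Set (H × H)) := hD.isClosed
  let f : G →L[ℂ] H :=
    (ContinuousLinearMap.snd ℂ H H + ((r : ℂ) * I) • ContinuousLinearMap.fst ℂ H H).comp G.subtypeL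
  have hbound : ∀ p : G, ‖p‖ ≤ ↑(‖r‖₊⁻¹ + 1) * ‖f p‖ := by
    rintro ⟨⟨u, v⟩, hp⟩
    obtain ⟨a, rfl, rfl⟩ := D.mem_graph_iff.mp hp
    have hfa : f ⟨_, hp⟩ = D.addScalar (r * I) a := rfl
    have ha := hD.isFormalAdjoint.abs_mul_norm_le_norm_addScalar r a
    have hDa := hD.isFormalAdjoint.norm_le_norm_addScalar r a
    rw [hfa, Submodule.coe_norm, Prod.norm_def, max_le_iff]
    push_cast
    rw [Real.norm_eq_abs]
    have hK : 1 ≤ |r|⁻¹ + 1 := le_add_of_nonneg_left (inv_nonneg.mpr (abs_nonneg r))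
    constructor
    · calc ‖(a : H)‖ ≤ |r|⁻¹ * ‖D.addScalar (r * I) a‖ := (le_inv_mul_iff₀ (abs_pos.mpr hr)).mpr ha
        _ ≤ _ := by gcongr; linarith
    · exact hDa.trans (le_mul_of_one_le_left (norm_nonneg _) hK)
  have hrange : Set.range f = LinearMap.range (D.addScalar (r * I)) := by
    ext v
    constructor
    · rintro ⟨⟨⟨u, v⟩, hp⟩, rfl⟩
      obtain ⟨a, rfl, rfl⟩ := D.mem_graph_iff.mp hp
      exact ⟨a, rfl⟩
    · rintro ⟨a, rfl⟩
      exact ⟨⟨_, D.mem_graph a⟩, rfl⟩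
  rw [← hrange]
  exact (f.antilipschitz_of_bound hbound).isClosed_range f.uniformContinuous

theorem orthogonal_range_addScalar_eq_bot : (LinearMap.range (D.addScalar (r * I)))ᗮ = ⊥ := by
  refine (Submodule.eq_bot_iff _).mpr fun u hperp => ?_
  have hinner (a : D.domain) : inner ℂ (((r : ℂ) * I) • u) (a : H) = inner ℂ u (D a) := by
    have h := inner_eq_zero_symm.mp ((Submodule.mem_orthogonal _ u).mp hperp _ ⟨a, rfl⟩)
    rw [addScalar_apply, inner_add_right, inner_smul_right, add_eq_zero_iff_eq_neg] at h
    rw [inner_smul_left, h]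
    simp
  obtain ⟨hu, hDu⟩ := hD.exists_mem_domain_apply_eq_of_inner hinner
  have h := hD.isFormalAdjoint.abs_mul_norm_le_norm_addScalar (-r) ⟨u, hu⟩
  rw [addScalar_apply, hDu, ofReal_neg, neg_mul, neg_smul, add_neg_cancel, norm_zero,
    abs_neg] at h
  exact norm_le_zero_iff.mp (le_of_mul_le_mul_left (h.trans (mul_zero _).ge) (abs_pos.mpr hr))

theorem addScalar_surjective : Function.Surjective (D.addScalar (r * I)) := by
  have : CompleteSpace (LinearMap.range (D.addScalar (r * I))) :=
    (hD.isClosed_range_addScalar hr).completeSpace_coe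
  exact LinearMap.range_eq_top.mp
    (Submodule.orthogonal_eq_bot_iff.mp (hD.orthogonal_range_addScalar_eq_bot hr))

end IsSelfAdjoint

namespace CommutatorRel

variable {D : H →ₗ.[ℂ] H} {x y : H →L[ℂ] H}

theorem sub_smul_one (h : CommutatorRel D x y) (μ : ℂ) : CommutatorRel D (x - μ • 1) y := by
  intro ξ hξ
  obtain ⟨hx, hxy⟩ := h ξ hξ
  refine ⟨sub_mem hx (D.domain.smul_mem μ hξ), ?_⟩
  calc D ⟨(x - μ • 1) ξ, _⟩ - (x - μ • 1) (D ⟨ξ, hξ⟩)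
      = D (⟨x ξ, hx⟩ - μ • ⟨ξ, hξ⟩) - (x (D ⟨ξ, hξ⟩) - μ • D ⟨ξ, hξ⟩) := rfl
    _ = y ξ := by rw [D.map_sub, D.map_smul, ← hxy]; abel

theorem inverse [CompleteSpace H] (hD : IsSelfAdjoint D) {z : H →L[ℂ] H}
    (h : CommutatorRel D x y) (hxz : x * z = 1) (hzx : z * x = 1) :
    CommutatorRel D z (-(z * y * z)) := by
  have hxz' (v : H) : x (z v) = v := DFunLike.congr_fun hxz v
  have hzx' (v : H) : z (x v) = v := DFunLike.congr_fun hzx v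
  intro ξ hξ
  set r : ℝ := ‖y * z‖ + 1
  have hr : ‖y * z‖ < |r| := by rw [abs_of_pos (by positivity)]; linarith
  obtain ⟨⟨a, ha⟩, hTa⟩ := hD.addScalar_surjective (r := r) (by positivity)
    (z (D ⟨ξ, hξ⟩ + (r * I : ℂ) • ξ - y (z ξ)))
  rw [LinearPMap.addScalar_apply, Submodule.coe_mk] at hTa
  obtain ⟨hxa, hDxa⟩ := h a ha
  let b : D.domain := ⟨x a, hxa⟩ - ⟨ξ, hξ⟩
  have hzb : z b = a - z ξ := by
    simp only [b, Submodule.coe_sub, map_sub, hzx']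
  have hTb : D.addScalar (r * I) b = (y * z) b := by
    calc D.addScalar (r * I) b
        = (x (D ⟨a, ha⟩ + (r * I : ℂ) • a) + y a) - (D ⟨ξ, hξ⟩ + (r * I : ℂ) • ξ) := by
          rw [LinearPMap.addScalar_apply, D.map_sub, ← hDxa]
          simp only [b, map_add, map_smul, Submodule.coe_sub]
          module
      _ = (y * z) b := by
          change _ = y (z b)
          rw [hTa, hxz', hzb, map_sub]
          abel
  have hza : a = z ξ := by
    rw [← sub_eq_zero, ← hzb, hD.isFormalAdjoint.eq_zero_of_addScalar_eq hr hTb, map_zero]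
  subst hza
  refine ⟨ha, ?_⟩
  rw [map_sub, map_add, map_smul] at hTa
  show _ = -z (y (z ξ))
  linear_combination (norm := module) hTa

end CommutatorRel

end

theorem delta_of_resolvent_general
    {H : Type*} [NormedAddCommGroup H] [InnerProductSpace ℂ H] [CompleteSpace H]
    (D : H →ₗ.[ℂ] H) (hsa : IsSelfAdjoint D)
    (x y : H →L[ℂ] H) (hxy : CommutatorRel D x y)
    (μ : ℂ) (z : H →L[ℂ] H)
    (hz₁ : (x - μ • 1) * z = 1) (hz₂ : z * (x - μ • 1) = 1) :
    -- `z = (x − μ·1)⁻¹ ∈ dom(δ_D)` with `δ_D(z) = −z δ_D(x) z`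
    CommutatorRel D z (-(z * y * z))
    -- in particular, if `δ_D(x)` is compact then `δ_D((x − μ·1)⁻¹)` is compact
    ∧ (IsCompactOperator ⇑y → IsCompactOperator ⇑(-(z * y * z))) :=
  ⟨(hxy.sub_smul_one μ).inverse hsa hz₁ hz₂, fun hy => ((hy.comp_clm z).clm_comp z).neg⟩

theorem delta_of_resolvent
    {H : Type*} [NormedAddCommGroup H] [InnerProductSpace ℂ H] [CompleteSpace H]
    (D : H →ₗ.[ℂ] H) (hdense : Dense (D.domain : Set H)) (hsa : IsSelfAdjoint D)
    (x y : H →L[ℂ] H) (hxy : CommutatorRel D x y)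
    (μ : ℂ) (z : H →L[ℂ] H)
    (hz₁ : (x - μ • 1) * z = 1) (hz₂ : z * (x - μ • 1) = 1) :
    -- `z = (x − μ·1)⁻¹ ∈ dom(δ_D)` with `δ_D(z) = −z δ_D(x) z`
    CommutatorRel D z (-(z * y * z))
    -- in particular, if `δ_D(x)` is compact then `δ_D((x − μ·1)⁻¹)` is compact
    ∧ (IsCompactOperator ⇑y → IsCompactOperator ⇑(-(z * y * z))) :=
  delta_of_resolvent_general D hsa x y hxy μ z hz₁ hz₂
end

section
/- Let ℋ be a complex Hilbert space, D a densely defined closed linear operator on ℋ, and (e_n) a sequence of orthogonal projections on ℋ such that for every n the range of e_n is contained in dom D and D(e_n ξ) = e_n(Dξ) for all ξ ∈ dom D, and such that e_n ξ → ξ for every ξ ∈ ℋ (strong convergence to the identity). Then for every x ∈ dom(δ_D) such that both x and δ_D(x) are compact operators: e_n x ∈ dom(δ_D) with δ_D(e_n x) = e_n δ_D(x) for every n, and ‖e_n x − x‖ + ‖δ_D(e_n x) − δ_D(x)‖ → 0 as n → ∞. -/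
open Filter Metric
open scoped ComplexInnerProductSpace

/-- A self-adjoint idempotent has norm at most 1. -/
lemma proj_norm_le_one {H : Type*} [NormedAddCommGroup H] [InnerProductSpace ℂ H]
    [CompleteSpace H] (e : H →L[ℂ] H) (hidem : e * e = e) (hsa : IsSelfAdjoint e) :
    ‖e‖ ≤ 1 := by
  refine ContinuousLinearMap.opNorm_le_bound e zero_le_one (fun ξ => ?_)
  rw [one_mul]
  have h2 : ⟪e ξ, e ξ⟫ = ⟪ξ, e ξ⟫ := by
    calc ⟪e ξ, e ξ⟫ = ⟪ξ, (ContinuousLinearMap.adjoint e) (e ξ)⟫ := by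
          rw [ContinuousLinearMap.adjoint_inner_right]
      _ = ⟪ξ, (e * e) ξ⟫ := by rw [hsa.adjoint_eq]; rfl
      _ = ⟪ξ, e ξ⟫ := by rw [hidem]
  have h3 : ‖e ξ‖ ^ 2 ≤ ‖ξ‖ * ‖e ξ‖ := by
    calc ‖e ξ‖ ^ 2 = RCLike.re ⟪e ξ, e ξ⟫ := (inner_self_eq_norm_sq _).symm
      _ = RCLike.re ⟪ξ, e ξ⟫ := by rw [h2]
      _ ≤ ‖(⟪ξ, e ξ⟫ : ℂ)‖ := RCLike.re_le_norm _
      _ ≤ ‖ξ‖ * ‖e ξ‖ := norm_inner_le_norm _ _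
  rcases eq_or_lt_of_le (norm_nonneg (e ξ)) with h | h
  · rw [← h]; exact norm_nonneg ξ
  · nlinarith [h3]

/-- Strong convergence with uniform bound gives norm convergence on compact operators. -/
lemma tendsto_norm_comp_compact {H : Type*} [NormedAddCommGroup H] [InnerProductSpace ℂ H]
    [CompleteSpace H] (e : ℕ → H →L[ℂ] H) (hbound : ∀ n, ‖e n‖ ≤ 1)
    (hstrong : ∀ ξ : H, Tendsto (fun n => e n ξ) atTop (nhds ξ))
    (x : H →L[ℂ] H) (hx : IsCompactOperator ⇑x) :
    Tendsto (fun n => ‖e n * x - x‖) atTop (nhds 0) := by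
  rw [Metric.tendsto_atTop]
  intro ε hε
  have hε4 : 0 < ε / 4 := by linarith
  have hK : IsCompact (closure (⇑x '' closedBall 0 1)) :=
    hx.isCompact_closure_image_closedBall (𝕜₁ := ℂ) 1
  obtain ⟨S, hSfin, hScov⟩ := totallyBounded_iff.mp hK.totallyBounded (ε / 4) hε4
  have hev : ∀ᶠ n in atTop, ∀ s ∈ S, ‖e n s - s‖ < ε / 4 := by
    refine (Set.Finite.eventually_all hSfin).mpr (fun s _ => ?_)
    have h0 : Tendsto (fun n => ‖e n s - s‖) atTop (nhds 0) := by
      have := ((hstrong s).sub_const s).norm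
      simpa using this
    exact h0.eventually_lt_const hε4
  rw [eventually_atTop] at hev
  obtain ⟨N, hN⟩ := hev
  refine ⟨N, fun n hn => ?_⟩
  -- pointwise bound on unit vectors
  have hunit : ∀ u : H, ‖u‖ ≤ 1 → ‖(e n * x - x) u‖ ≤ 3 * (ε / 4) := by
    intro u hu
    have hxu : x u ∈ closure (⇑x '' closedBall 0 1) :=
      subset_closure ⟨u, by simpa [mem_closedBall, dist_eq_norm] using hu, rfl⟩
    obtain ⟨s, hsS, hs⟩ := Set.mem_iUnion₂.mp (hScov hxu)
    have hs' : ‖x u - s‖ < ε / 4 := by rw [mem_ball, dist_eq_norm] at hs; exact hs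
    have h1 : ‖e n (x u - s)‖ ≤ ‖x u - s‖ := by
      calc ‖e n (x u - s)‖ ≤ ‖e n‖ * ‖x u - s‖ := ContinuousLinearMap.le_opNorm _ _
        _ ≤ 1 * ‖x u - s‖ := mul_le_mul_of_nonneg_right (hbound n) (norm_nonneg _)
        _ = ‖x u - s‖ := one_mul _
    have h2 : ‖e n s - s‖ < ε / 4 := hN n hn s hsS
    have key : (e n * x - x) u = e n (x u - s) + (e n s - s) + (s - x u) := by
      simp only [ContinuousLinearMap.sub_apply, ContinuousLinearMap.mul_apply, map_sub]
      abel
    have hrev : ‖s - x u‖ = ‖x u - s‖ := norm_sub_rev _ _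
    calc ‖(e n * x - x) u‖ = ‖e n (x u - s) + (e n s - s) + (s - x u)‖ := by rw [key]
      _ ≤ ‖e n (x u - s)‖ + ‖e n s - s‖ + ‖s - x u‖ := norm_add₃_le
      _ ≤ 3 * (ε / 4) := by linarith
  have hb : ‖e n * x - x‖ ≤ 3 * (ε / 4) := by
    refine ContinuousLinearMap.opNorm_le_bound _ (by positivity) (fun v => ?_)
    rcases eq_or_ne v 0 with rfl | hv
    · simp
    · have hvpos : (0:ℝ) < ‖v‖ := norm_pos_iff.mpr hv
      have hu : ‖(‖v‖⁻¹ : ℂ) • v‖ ≤ 1 := by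
        rw [norm_smul]
        simp [hvpos.ne']
      have := hunit ((‖v‖⁻¹ : ℂ) • v) hu
      rw [map_smul, norm_smul] at this
      have h5 : ‖(‖v‖⁻¹ : ℂ)‖ = ‖v‖⁻¹ := by
        simp [abs_of_nonneg (inv_nonneg.mpr (norm_nonneg v))]
      rw [h5] at this
      calc ‖(e n * x - x) v‖ = ‖v‖ * (‖v‖⁻¹ * ‖(e n * x - x) v‖) := by
            field_simp
        _ ≤ ‖v‖ * (3 * (ε / 4)) := by
            exact mul_le_mul_of_nonneg_left this (norm_nonneg v)
        _ = 3 * (ε / 4) * ‖v‖ := by ring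
  calc dist ‖e n * x - x‖ 0 = ‖e n * x - x‖ := by
        rw [Real.dist_eq, sub_zero, abs_of_nonneg (norm_nonneg _)]
    _ ≤ 3 * (ε / 4) := hb
    _ < ε := by linarith

theorem approximate_identity_in_K1
    {H : Type*} [NormedAddCommGroup H] [InnerProductSpace ℂ H] [CompleteSpace H]
    (D : H →ₗ.[ℂ] H) (hdense : Dense (D.domain : Set H)) (hclosed : D.IsClosed)
    (e : ℕ → H →L[ℂ] H)
    (hidem : ∀ n, e n * e n = e n) (hsa : ∀ n, IsSelfAdjoint (e n))
    (hrange : ∀ (n : ℕ) (ξ : H), e n ξ ∈ D.domain)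
    (hcomm : ∀ (n : ℕ) (ξ : H) (hξ : ξ ∈ D.domain),
      D ⟨e n ξ, hrange n ξ⟩ = e n (D ⟨ξ, hξ⟩))
    (hstrong : ∀ ξ : H, Filter.Tendsto (fun n => e n ξ) Filter.atTop (nhds ξ))
    (x y : H →L[ℂ] H) (hxy : CommutatorRel D x y)
    (hx : IsCompactOperator ⇑x) (hy : IsCompactOperator ⇑y) :
    -- `e_n x ∈ dom(δ_D)` with `δ_D(e_n x) = e_n δ_D(x)`
    (∀ n, CommutatorRel D (e n * x) (e n * y))
    -- `‖e_n x − x‖₁ = ‖e_n x − x‖ + ‖δ_D(e_n x) − δ_D(x)‖ → 0`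
    ∧ Filter.Tendsto (fun n => ‖e n * x - x‖ + ‖e n * y - y‖)
        Filter.atTop (nhds 0) := by
  constructor
  · intro n ξ hξ
    obtain ⟨hmem, heq⟩ := hxy ξ hξ
    refine ⟨hrange n (x ξ), ?_⟩
    have h1 : D ⟨(e n * x) ξ, hrange n (x ξ)⟩ = e n (D ⟨x ξ, hmem⟩) := hcomm n (x ξ) hmem
    rw [h1]
    simp only [ContinuousLinearMap.mul_apply]
    rw [← map_sub, heq]
  · have hbound := fun n => proj_norm_le_one (e n) (hidem n) (hsa n)
    have t1 := tendsto_norm_comp_compact e hbound hstrong x hx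
    have t2 := tendsto_norm_comp_compact e hbound hstrong y hy
    simpa using t1.add t2
end

section
/- Let H be a perfect group, ℋ and 𝒦 complex Hilbert spaces, λ̂ : H → U(ℋ) and μ̂ : H → U(𝒦) projective unitary representations of H, and let u, v : ℋ → 𝒦 be unitary operators such that for every g ∈ H there exist scalars z(g), w(g) ∈ ℂ with |z(g)| = |w(g)| = 1, u λ̂(g) u* = z(g) μ̂(g) and v λ̂(g) v* = w(g) μ̂(g). Then u x u* = v x v* for every bounded operator x in the double centralizer (bicommutant) of the set {λ̂(g) : g ∈ H} in B(ℋ). -/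
/-!
Statement 11: Let `H` be a perfect group, `λ̂`, `μ̂` projective unitary representations of `H`
on complex Hilbert spaces `ℋ`, `𝒦`, and `u, v : ℋ → 𝒦` unitaries with
`u λ̂(g) u* = z(g) μ̂(g)` and `v λ̂(g) v* = w(g) μ̂(g)` for scalars of modulus one. Then
`u x u* = v x v*` for every `x` in the double centralizer of `{λ̂(g)}` in `B(ℋ)`.
-/

open ContinuousLinearMap in
theorem conjugation_independent_of_intertwiner_on_bicommutant
    {G : Type*} [Group G] (hperfect : commutator G = ⊤)
    {H : Type*} [NormedAddCommGroup H] [InnerProductSpace ℂ H] [CompleteSpace H]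
    {K : Type*} [NormedAddCommGroup K] [InnerProductSpace ℂ K] [CompleteSpace K]
    (lam : G → H →L[ℂ] H) (mu : G → K →L[ℂ] K)
    (hlam_unit : ∀ g, lam g ∈ unitary (H →L[ℂ] H))
    (hlam_proj : ∀ g h : G, ∃ c : ℂ, ‖c‖ = 1 ∧ lam g * lam h = c • lam (g * h))
    (hmu_unit : ∀ g, mu g ∈ unitary (K →L[ℂ] K))
    (hmu_proj : ∀ g h : G, ∃ c : ℂ, ‖c‖ = 1 ∧ mu g * mu h = c • mu (g * h))
    (u v : H →L[ℂ] K)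
    (hu₁ : (adjoint u).comp u = 1) (hu₂ : u.comp (adjoint u) = 1)
    (hv₁ : (adjoint v).comp v = 1) (hv₂ : v.comp (adjoint v) = 1)
    (hucov : ∀ g : G, ∃ z : ℂ, ‖z‖ = 1 ∧
      u.comp ((lam g).comp (adjoint u)) = z • mu g)
    (hvcov : ∀ g : G, ∃ w : ℂ, ‖w‖ = 1 ∧
      v.comp ((lam g).comp (adjoint v)) = w • mu g) :
    ∀ x : H →L[ℂ] H, x ∈ Set.centralizer (Set.centralizer (Set.range lam)) →
      u.comp (x.comp (adjoint u)) = v.comp (x.comp (adjoint v)) := by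
  intro x hx
  by_cases hH : Subsingleton H
  · have h1 : x.comp (adjoint u) = 0 := by ext k; exact Subsingleton.elim _ _
    have h2 : x.comp (adjoint v) = 0 := by ext k; exact Subsingleton.elim _ _
    rw [h1, h2, ContinuousLinearMap.comp_zero, ContinuousLinearMap.comp_zero]
  rw [not_subsingleton_iff_nontrivial] at hH
  set a : H →L[ℂ] H := (adjoint v).comp u with ha_def
  set b : H →L[ℂ] H := (adjoint u).comp v with hb_def
  have hab : a * b = 1 := by
    show ((adjoint v).comp u).comp ((adjoint u).comp v) = 1
    rw [comp_assoc, ← comp_assoc u, hu₂, one_def, id_comp, hv₁]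
  have hba : b * a = 1 := by
    show ((adjoint u).comp v).comp ((adjoint v).comp u) = 1
    rw [comp_assoc, ← comp_assoc v, hv₂, one_def, id_comp, hu₁]
  have hone : (1 : H →L[ℂ] H) ≠ 0 := by
    intro h
    obtain ⟨y, z, hyz⟩ := hH
    exact hyz (by calc y = (1 : H →L[ℂ] H) y := rfl
      _ = (0 : H →L[ℂ] H) y := by rw [h]
      _ = (1 : H →L[ℂ] H) z := by rw [h]; rfl
      _ = z := rfl)
  -- scalar cancellation
  have hcancel : ∀ (s t : ℂ) (T T' : H →L[ℂ] H), T * T' = 1 → s • T = t • T → s = t := by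
    intro s t T T' hTT' hst
    have : s • (1 : H →L[ℂ] H) = t • 1 := by
      rw [← hTT', ← smul_mul_assoc, ← smul_mul_assoc, hst]
    have h2 : (s - t) • (1 : H →L[ℂ] H) = 0 := by rw [sub_smul, this, sub_self]
    rcases smul_eq_zero.mp h2 with h | h
    · exact sub_eq_zero.mp h
    · exact absurd h hone
  -- key commutation relation
  have hcomm : ∀ g : G, ∃ c : ℂ, ‖c‖ = 1 ∧ a * lam g = c • (lam g * a) := by
    intro g
    obtain ⟨z, hz, hz'⟩ := hucov g
    obtain ⟨w, hw, hw'⟩ := hvcov g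
    have hw0 : w ≠ 0 := by intro h; rw [h] at hw; simp at hw
    -- w • (u ∘ lam g ∘ u*) = z • (v ∘ lam g ∘ v*)
    have key : w • (u.comp ((lam g).comp (adjoint u))) = z • (v.comp ((lam g).comp (adjoint v))) := by
      rw [hz', hw', smul_comm]
    have hv₁' : ∀ ξ : H, adjoint v (v ξ) = ξ := fun ξ => by
      have := congrArg (fun T : H →L[ℂ] H => T ξ) hv₁
      simpa using this
    -- compose with v* on left plus v on right
    have lhs_eq : (adjoint v).comp ((u.comp ((lam g).comp (adjoint u))).comp v)
        = a * lam g * b := by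
      simp only [mul_def, ha_def, hb_def, comp_assoc]
    have rhs_eq : (adjoint v).comp ((v.comp ((lam g).comp (adjoint v))).comp v)
        = lam g := by
      ext ξ; simp [hv₁']
    have key2 : w • (a * lam g * b) = z • (lam g) := by
      have h1 := congrArg (fun T : K →L[ℂ] K => (adjoint v).comp (T.comp v)) key
      simp only [smul_comp, comp_smul] at h1
      rw [lhs_eq, rhs_eq] at h1
      exact h1
    have key3 : w • (a * lam g) = z • (lam g * a) := by
      have h2 := congrArg (fun T : H →L[ℂ] H => T * a) key2
      simp only [smul_mul_assoc] at h2
      rw [mul_assoc (a * lam g) b a, hba, mul_one] at h2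
      exact h2
    refine ⟨w⁻¹ * z, by rw [norm_mul, norm_inv, hw, hz]; norm_num, ?_⟩
    rw [mul_smul]
    rw [← key3, smul_smul, inv_mul_cancel₀ hw0, one_smul]
  classical
  choose c hc1 hc2 using hcomm
  have hc0 : ∀ g, c g ≠ 0 := fun g h => by have := hc1 g; rw [h] at this; simp at this
  -- multiplicativity
  have hmul : ∀ g h : G, c (g * h) = c g * c h := by
    intro g h
    obtain ⟨σ, hσ, hσ'⟩ := hlam_proj g h
    have hσ0 : σ ≠ 0 := fun e => by rw [e] at hσ; simp at hσ
    have T' : (lam (g*h) * a) * (b * star (lam (g*h))) = 1 := by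
      rw [mul_assoc, ← mul_assoc a b, hab, one_mul]
      exact (Unitary.mem_iff.mp (hlam_unit (g*h))).2
    have e1 : a * (lam g * lam h) = (c g * c h * σ) • (lam (g*h) * a) := by
      rw [← mul_assoc, hc2 g, smul_mul_assoc, mul_assoc, hc2 h, mul_smul_comm,
        ← mul_assoc, hσ', smul_mul_assoc]
      simp only [smul_smul]
      ring_nf
    have e2 : a * (lam g * lam h) = (σ * c (g*h)) • (lam (g*h) * a) := by
      rw [hσ', mul_smul_comm, hc2 (g*h), smul_smul]
    have heq := hcancel _ _ _ _ T' (e2.symm.trans e1)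
    exact mul_left_cancel₀ hσ0 (heq.trans (by ring))
  -- the monoid hom into ℂˣ
  let φ : G →* ℂˣ := MonoidHom.mk' (fun g => Units.mk0 (c g) (hc0 g))
    (fun g h => by ext; exact hmul g h)
  have hφ : ∀ g, φ g = 1 := by
    intro g
    have : (⊤ : Subgroup G) ≤ φ.ker := hperfect ▸ Abelianization.commutator_subset_ker φ
    exact this (Subgroup.mem_top g)
  have hc1' : ∀ g, c g = 1 := fun g => congrArg Units.val (hφ g)
  have hacomm : ∀ g, a * lam g = lam g * a := fun g => by
    rw [hc2 g, hc1' g, one_smul]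
  -- a is in the centralizer of range lam
  have hamem : a ∈ Set.centralizer (Set.range lam) := by
    rintro m ⟨g, rfl⟩
    exact (hacomm g).symm
  have hax : a * x = x * a := hx a hamem
  have haxb : a * x * b = x := by rw [hax, mul_assoc, hab, mul_one]
  -- finish
  have hva : v.comp a = u := by
    rw [ha_def, ← comp_assoc, hv₂, one_def, id_comp]
  have hbv : b.comp (adjoint v) = adjoint u := by
    rw [hb_def, comp_assoc, hv₂, one_def, comp_id]
  calc u.comp (x.comp (adjoint u))
      = (v.comp a).comp (x.comp (b.comp (adjoint v))) := by rw [hva, hbv]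
    _ = v.comp (((a * x * b)).comp (adjoint v)) := by
        simp only [mul_def, comp_assoc]
    _ = v.comp (x.comp (adjoint v)) := by rw [haxb]
end
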